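/- arXiv:1210.2087 — 2 statements merged into one kernel-verified Lean document; each statement's English description precedes it below -/
import Mathlib

section
/- Let d ≥ 1 and let G, G' be real d×d lower triangular matrices; set ΔG := G' − G, H := G Gᵀ and ΔH := G' G'ᵀ − G Gᵀ. Then for every index i one has the exact identity 2 G_{ii} ΔG_{ii} = ΔH_{ii} − 2 Σ_{k<i} G_{ik} ΔG_{ik} − Σ_{k≤i} (ΔG_{ik})², and for all indices i > j one has G_{jj} ΔG_{ij} = ΔH_{ij} − G_{ij} ΔG_{jj} − Σ_{k<j} (G_{ik} ΔG_{jk} + ΔG_{ik} G_{jk}) − Σ_{k≤j} ΔG_{ik} ΔG_{jk}. Consequently, if the diagonal entries of G are positive, then ΔG_{ii} = (ΔH_{ii} − 2 Σ_{k<i} ΔG_{ik} G_{ik})/(2 G_{ii}) + E_{ii} with |E_{ii}| ≤ ‖ΔG‖_F²/(2 G_{ii}), and for i > j, ΔG_{ij} = (ΔH_{ij} − G_{ij} ΔG_{jj} − Σ_{k<j}(ΔG_{jk} G_{ik} + ΔG_{ik} G_{jk}))/G_{jj} + E_{ij} with |E_{ij}| ≤ ‖ΔG‖_F²/G_{jj}.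 -/
open Finset Matrix

/-- Frobenius norm of a real square matrix. -/
noncomputable def frobNorm {d : ℕ} (A : Matrix (Fin d) (Fin d) ℝ) : ℝ :=
  Real.sqrt (∑ i, ∑ j, (A i j) ^ 2)

/-
Write `G' = G + Δ`. Then `G' G'ᵀ - G Gᵀ = G Δᵀ + Δ Gᵀ + Δ Δᵀ`, and since every right-hand
factor is lower triangular, entry `(i, j)` of each product only involves the columns `k ≤ j`.
Splitting off the term `k = j` leaves `G j j * Δ i j` alone on one side, which is the recursion;
the remainder is the quadratic sum `∑ k ≤ j, Δ i k * Δ j k`, bounded by `‖Δ‖_F²` via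
`|a b| ≤ (a² + b²) / 2`.
-/

namespace Matrix

variable {n R : Type*} [Fintype n]

theorem add_mul_transpose_add_sub_mul_transpose [NonUnitalNonAssocRing R] (A B : Matrix n n R) :
    (A + B) * (A + B)ᵀ - A * Aᵀ = A * Bᵀ + B * Aᵀ + B * Bᵀ := by
  simp only [transpose_add, add_mul, mul_add]
  abel

variable [LinearOrder n] [LocallyFiniteOrderBot n]

theorem mul_transpose_apply_eq_sum_Iic [NonUnitalNonAssocSemiring R] {A B : Matrix n n R}
    (hB : B.BlockTriangular OrderDual.toDual) (i j : n) :
    (A * Bᵀ) i j = ∑ k ∈ Iic j, A i k * B j k := by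
  rw [mul_apply, ← sum_subset (subset_univ (Iic j))]
  · rfl
  · intro k _ hk
    rw [transpose_apply, hB (not_le.mp (by simpa using hk)), mul_zero]

variable [CommRing R]

theorem diag_mul_apply_eq_of_blockTriangular {G Δ : Matrix n n R}
    (hG : G.BlockTriangular OrderDual.toDual) (hΔ : Δ.BlockTriangular OrderDual.toDual)
    (i j : n) :
    G j j * Δ i j =
      ((G + Δ) * (G + Δ)ᵀ - G * Gᵀ) i j - G i j * Δ j j
        - ∑ k ∈ Iio j, (G i k * Δ j k + Δ i k * G j k)
        - ∑ k ∈ Iic j, Δ i k * Δ j k := by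
  rw [add_mul_transpose_add_sub_mul_transpose, add_apply, add_apply,
    mul_transpose_apply_eq_sum_Iic hΔ, mul_transpose_apply_eq_sum_Iic hG,
    mul_transpose_apply_eq_sum_Iic hΔ]
  simp only [Iic_eq_cons_Iio, sum_cons, sum_add_distrib]
  ring

theorem two_mul_diag_mul_apply_self_eq_of_blockTriangular {G Δ : Matrix n n R}
    (hG : G.BlockTriangular OrderDual.toDual) (hΔ : Δ.BlockTriangular OrderDual.toDual)
    (i : n) :
    2 * G i i * Δ i i =
      ((G + Δ) * (G + Δ)ᵀ - G * Gᵀ) i i - 2 * ∑ k ∈ Iio i, G i k * Δ i k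
        - ∑ k ∈ Iic i, Δ i k ^ 2 := by
  have h := diag_mul_apply_eq_of_blockTriangular hG hΔ i i
  simp only [mul_comm (Δ i _) (G i _), ← two_mul, ← mul_sum, ← sq] at h
  linear_combination h

end Matrix

theorem sq_frobNorm {d : ℕ} (A : Matrix (Fin d) (Fin d) ℝ) :
    frobNorm A ^ 2 = ∑ i, ∑ j, A i j ^ 2 :=
  Real.sq_sqrt (by positivity)

theorem sum_sq_le_sq_frobNorm {d : ℕ} (A : Matrix (Fin d) (Fin d) ℝ) (i : Fin d)
    (s : Finset (Fin d)) : ∑ k ∈ s, A i k ^ 2 ≤ frobNorm A ^ 2 := by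
  have hnonneg (i' : Fin d) : 0 ≤ ∑ k, A i' k ^ 2 := by positivity
  calc ∑ k ∈ s, A i k ^ 2 ≤ ∑ k, A i k ^ 2 :=
        sum_le_sum_of_subset_of_nonneg (subset_univ s) fun k _ _ => sq_nonneg _
    _ ≤ ∑ i', ∑ k, A i' k ^ 2 := single_le_sum (fun i' _ => hnonneg i') (mem_univ i)
    _ = frobNorm A ^ 2 := (sq_frobNorm A).symm

theorem abs_sum_mul_le_sq_frobNorm {d : ℕ} (A : Matrix (Fin d) (Fin d) ℝ) (i j : Fin d)
    (s : Finset (Fin d)) : |∑ k ∈ s, A i k * A j k| ≤ frobNorm A ^ 2 :=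
  calc |∑ k ∈ s, A i k * A j k|
      ≤ ∑ k ∈ s, |A i k * A j k| := abs_sum_le_sum_abs _ _
    _ ≤ ∑ k ∈ s, (A i k ^ 2 + A j k ^ 2) / 2 :=
        sum_le_sum fun k _ => by
          rw [abs_mul]
          linarith [two_mul_le_add_sq |A i k| |A j k|, sq_abs (A i k), sq_abs (A j k)]
    _ = (∑ k ∈ s, A i k ^ 2 + ∑ k ∈ s, A j k ^ 2) / 2 := by
        rw [← sum_add_distrib, sum_div]
    _ ≤ frobNorm A ^ 2 := by
        linarith [sum_sq_le_sq_frobNorm A i s, sum_sq_le_sq_frobNorm A j s]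

theorem abs_sub_div_le_of_mul_eq_sub {c x y r e : ℝ} (hc : 0 < c) (h : c * x = y - r)
    (hr : |r| ≤ e) : |x - y / c| ≤ e / c := by
  have hx : x - y / c = -r / c := by
    field_simp
    linear_combination h
  rw [hx, abs_div, abs_neg, abs_of_pos hc]
  gcongr

theorem cholesky_perturbation_recursion_general {d : ℕ}
    (G G' : Matrix (Fin d) (Fin d) ℝ)
    (hG : ∀ i j : Fin d, i < j → G i j = 0)
    (hG' : ∀ i j : Fin d, i < j → G' i j = 0)
    (ΔG : Matrix (Fin d) (Fin d) ℝ) (hΔG : ΔG = G' - G)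
    (ΔH : Matrix (Fin d) (Fin d) ℝ) (hΔH : ΔH = G' * G'ᵀ - G * Gᵀ) :
    (∀ i : Fin d,
      2 * G i i * ΔG i i =
        ΔH i i - 2 * ∑ k ∈ Finset.Iio i, G i k * ΔG i k
          - ∑ k ∈ Finset.Iic i, (ΔG i k) ^ 2) ∧
    (∀ i j : Fin d, j < i →
      G j j * ΔG i j =
        ΔH i j - G i j * ΔG j j
          - ∑ k ∈ Finset.Iio j, (G i k * ΔG j k + ΔG i k * G j k)
          - ∑ k ∈ Finset.Iic j, ΔG i k * ΔG j k) ∧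
    ((∀ i : Fin d, 0 < G i i) →
      (∀ i : Fin d,
        |ΔG i i - (ΔH i i - 2 * ∑ k ∈ Finset.Iio i, ΔG i k * G i k) / (2 * G i i)|
          ≤ frobNorm ΔG ^ 2 / (2 * G i i)) ∧
      (∀ i j : Fin d, j < i →
        |ΔG i j - (ΔH i j - G i j * ΔG j j
            - ∑ k ∈ Finset.Iio j, (ΔG j k * G i k + ΔG i k * G j k)) / (G j j)|
          ≤ frobNorm ΔG ^ 2 / G j j)) := by
  have hGl : G.BlockTriangular OrderDual.toDual := fun i j h => hG i j h
  have hG'l : G'.BlockTriangular OrderDual.toDual := fun i j h => hG' i j h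
  have hΔl : ΔG.BlockTriangular OrderDual.toDual := hΔG ▸ hG'l.sub hGl
  obtain rfl : G' = G + ΔG := by rw [hΔG, add_sub_cancel]
  subst hΔH
  have diag := two_mul_diag_mul_apply_self_eq_of_blockTriangular hGl hΔl
  have offdiag := diag_mul_apply_eq_of_blockTriangular hGl hΔl
  refine ⟨diag, fun i j _ => offdiag i j, fun hpos => ⟨fun i => ?_, fun i j _ => ?_⟩⟩
  · simp only [mul_comm (ΔG i _) (G i _)]
    refine abs_sub_div_le_of_mul_eq_sub (mul_pos two_pos (hpos i)) (diag i) ?_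
    simpa only [sq] using abs_sum_mul_le_sq_frobNorm ΔG i i (Iic i)
  · simp only [mul_comm (ΔG j _) (G i _)]
    exact abs_sub_div_le_of_mul_eq_sub (hpos j) (offdiag i j)
      (abs_sum_mul_le_sq_frobNorm ΔG i j (Iic j))

/-- Exact first-order perturbation recursion for the Cholesky factorization. -/
theorem cholesky_perturbation_recursion {d : ℕ} (hd : 1 ≤ d)
    (G G' : Matrix (Fin d) (Fin d) ℝ)
    (hG : ∀ i j : Fin d, i < j → G i j = 0)
    (hG' : ∀ i j : Fin d, i < j → G' i j = 0)
    (ΔG : Matrix (Fin d) (Fin d) ℝ) (hΔG : ΔG = G' - G)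
    (H : Matrix (Fin d) (Fin d) ℝ) (hH : H = G * Gᵀ)
    (ΔH : Matrix (Fin d) (Fin d) ℝ) (hΔH : ΔH = G' * G'ᵀ - G * Gᵀ) :
    (∀ i : Fin d,
      2 * G i i * ΔG i i =
        ΔH i i - 2 * ∑ k ∈ Finset.Iio i, G i k * ΔG i k
          - ∑ k ∈ Finset.Iic i, (ΔG i k) ^ 2) ∧
    (∀ i j : Fin d, j < i →
      G j j * ΔG i j =
        ΔH i j - G i j * ΔG j j
          - ∑ k ∈ Finset.Iio j, (G i k * ΔG j k + ΔG i k * G j k)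
          - ∑ k ∈ Finset.Iic j, ΔG i k * ΔG j k) ∧
    ((∀ i : Fin d, 0 < G i i) →
      (∀ i : Fin d,
        |ΔG i i - (ΔH i i - 2 * ∑ k ∈ Finset.Iio i, ΔG i k * G i k) / (2 * G i i)|
          ≤ frobNorm ΔG ^ 2 / (2 * G i i)) ∧
      (∀ i j : Fin d, j < i →
        |ΔG i j - (ΔH i j - G i j * ΔG j j
            - ∑ k ∈ Finset.Iio j, (ΔG j k * G i k + ΔG i k * G j k)) / (G j j)|
          ≤ frobNorm ΔG ^ 2 / G j j)) :=
  cholesky_perturbation_recursion_general G G' hG hG' ΔG hΔG ΔH hΔH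
end

section
/- Let p, d ≥ 1 and let H : ℝ^p → ℝ^{d×d} be such that H(x) is symmetric for every x, H is twice continuously differentiable with H and its first and second derivatives bounded on ℝ^p, and there exists λ > 0 such that H(x) − λ I is positive semidefinite for every x. Then there exists G : ℝ^p → ℝ^{d×d} such that for every x, G(x) is lower triangular with positive diagonal entries and G(x) G(x)ᵀ = H(x), and G is twice continuously differentiable with G and its first and second derivatives bounded on ℝ^p. -/
/-!
Pointwise, `H x` is positive definite, so it has a Cholesky factor `G x` (Mathlib's LDL
decomposition, with the columns rescaled by signs). The Cholesky–Banachiewicz recursion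
`G j j = √(H j j - ∑ k < j, G j k ^ 2)` and `G i j = (H i j - ∑ k < j, G i k * G j k) / G j j`
for `j < i` expresses each column of `G` through `H` and the earlier columns, so by induction on
the column all entries are C² with bounded derivatives: this class of functions is closed under
sums, products, and composition with `√` and `t ↦ t⁻¹` away from `0`. The uniform lower bound
`√λ ≤ G j j` that this needs comes from `H ≥ λ I` tested on the `j`-th row `v` of `G⁻¹`, for which
`vᵀ H v = 1` and `v j = (G j j)⁻¹`.
-/

open Finset Matrix

section BoundedDerivatives

variable {E F : Type*} [NormedAddCommGroup E] [NormedSpace ℝ E]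
  [NormedAddCommGroup F] [NormedSpace ℝ F]

def BddC1 (f : E → F) : Prop :=
  Differentiable ℝ f ∧ ∃ C, ∀ x, ‖f x‖ ≤ C ∧ ‖fderiv ℝ f x‖ ≤ C

def BddC2 (f : E → F) : Prop :=
  ContDiff ℝ 2 f ∧ BddC1 f ∧ BddC1 (fderiv ℝ f)

namespace BddC1

theorem const (c : F) : BddC1 fun _ : E => c :=
  ⟨differentiable_const c, ‖c‖, fun x => by simp⟩

theorem add {f g : E → F} (hf : BddC1 f) (hg : BddC1 g) : BddC1 fun x => f x + g x := by
  obtain ⟨hfd, Cf, hCf⟩ := hf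
  obtain ⟨hgd, Cg, hCg⟩ := hg
  refine ⟨hfd.add hgd, Cf + Cg, fun x => ⟨?_, ?_⟩⟩
  · exact (norm_add_le _ _).trans (add_le_add (hCf x).1 (hCg x).1)
  · rw [fderiv_fun_add (hfd x) (hgd x)]
    exact (norm_add_le _ _).trans (add_le_add (hCf x).2 (hCg x).2)

theorem neg {f : E → F} (hf : BddC1 f) : BddC1 fun x => -f x := by
  obtain ⟨hfd, C, hC⟩ := hf
  exact ⟨hfd.neg, C, fun x => by simpa [fderiv_fun_neg] using hC x⟩

theorem smul {u : E → ℝ} {v : E → F} (hu : BddC1 u) (hv : BddC1 v) :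
    BddC1 fun x => u x • v x := by
  obtain ⟨hud, Cu, hCu⟩ := hu
  obtain ⟨hvd, Cv, hCv⟩ := hv
  refine ⟨hud.smul hvd, 2 * Cu * Cv, fun x => ?_⟩
  have hCu0 : 0 ≤ Cu := (norm_nonneg _).trans (hCu x).1
  have hCv0 : 0 ≤ Cv := (norm_nonneg _).trans (hCv x).1
  have h00 : ‖u x‖ * ‖v x‖ ≤ Cu * Cv :=
    mul_le_mul (hCu x).1 (hCv x).1 (norm_nonneg _) hCu0
  have h01 : ‖u x‖ * ‖fderiv ℝ v x‖ ≤ Cu * Cv :=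
    mul_le_mul (hCu x).1 (hCv x).2 (norm_nonneg _) hCu0
  have h10 : ‖fderiv ℝ u x‖ * ‖v x‖ ≤ Cu * Cv :=
    mul_le_mul (hCu x).2 (hCv x).1 (norm_nonneg _) hCu0
  constructor
  · rw [norm_smul]
    nlinarith [mul_nonneg hCu0 hCv0]
  · rw [fderiv_fun_smul (hud x) (hvd x)]
    calc ‖u x • fderiv ℝ v x + (fderiv ℝ u x).smulRight (v x)‖
        ≤ ‖u x‖ * ‖fderiv ℝ v x‖ + ‖fderiv ℝ u x‖ * ‖v x‖ := by
          refine (norm_add_le _ _).trans_eq ?_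
          rw [norm_smul, ContinuousLinearMap.norm_smulRight_apply]
      _ ≤ 2 * Cu * Cv := by linarith

theorem comp {φ : ℝ → ℝ} {K : Set ℝ} (hK : IsCompact K) (hφ : ∀ t ∈ K, ContDiffAt ℝ 1 φ t)
    {f : E → ℝ} (hf : BddC1 f) (hfK : ∀ x, f x ∈ K) : BddC1 fun x => φ (f x) := by
  obtain ⟨hfd, C, hC⟩ := hf
  obtain ⟨M₀, hM₀⟩ := hK.exists_bound_of_continuousOn fun t ht =>
    (hφ t ht).continuousAt.continuousWithinAt
  obtain ⟨M₁, hM₁⟩ := hK.exists_bound_of_continuousOn fun t ht =>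
    ((hφ t ht).derivWithin (m := 0) le_rfl).continuousAt.continuousWithinAt
  have hderiv : ∀ x, HasFDerivAt (fun y => φ (f y)) (deriv φ (f x) • fderiv ℝ f x) x := fun x =>
    ((hφ _ (hfK x)).differentiableAt one_ne_zero).hasDerivAt.comp_hasFDerivAt x
      (hfd x).hasFDerivAt
  refine ⟨fun x => (hderiv x).differentiableAt, max M₀ (M₁ * C), fun x => ⟨?_, ?_⟩⟩
  · exact (hM₀ _ (hfK x)).trans (le_max_left _ _)
  · rw [(hderiv x).fderiv, norm_smul]
    refine le_max_of_le_right (mul_le_mul (hM₁ _ (hfK x)) (hC x).2 (norm_nonneg _) ?_)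
    exact (norm_nonneg _).trans (hM₁ _ (hfK x))

end BddC1

theorem bddC2_iff {f : E → F} : BddC2 f ↔ ContDiff ℝ 2 f ∧
    ∃ C, ∀ x, ‖f x‖ ≤ C ∧ ‖fderiv ℝ f x‖ ≤ C ∧ ‖fderiv ℝ (fderiv ℝ f) x‖ ≤ C := by
  constructor
  · rintro ⟨hf, ⟨-, C₀, hC₀⟩, ⟨-, C₁, hC₁⟩⟩
    exact ⟨hf, max C₀ C₁, fun x => ⟨(hC₀ x).1.trans (le_max_left _ _),
      (hC₀ x).2.trans (le_max_left _ _), (hC₁ x).2.trans (le_max_right _ _)⟩⟩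
  · rintro ⟨hf, C, hC⟩
    have hf' : ContDiff ℝ 1 (fderiv ℝ f) := hf.fderiv_right (m := 1) le_rfl
    exact ⟨hf, ⟨hf.differentiable two_ne_zero, C, fun x => ⟨(hC x).1, (hC x).2.1⟩⟩,
      ⟨hf'.differentiable one_ne_zero, C, fun x => ⟨(hC x).2.1, (hC x).2.2⟩⟩⟩

namespace BddC2

theorem const (c : F) : BddC2 fun _ : E => c := by
  refine ⟨contDiff_const, BddC1.const c, ?_⟩
  rw [fderiv_fun_const]
  exact BddC1.const 0

theorem add {f g : E → F} (hf : BddC2 f) (hg : BddC2 g) : BddC2 fun x => f x + g x := by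
  refine ⟨hf.1.add hg.1, hf.2.1.add hg.2.1, ?_⟩
  have : fderiv ℝ (fun x => f x + g x) = fun x => fderiv ℝ f x + fderiv ℝ g x :=
    funext fun x => fderiv_fun_add (hf.2.1.1 x) (hg.2.1.1 x)
  exact this ▸ hf.2.2.add hg.2.2

theorem neg {f : E → F} (hf : BddC2 f) : BddC2 fun x => -f x := by
  refine ⟨hf.1.neg, hf.2.1.neg, ?_⟩
  have : fderiv ℝ (fun x => -f x) = fun x => -fderiv ℝ f x := funext fun x => fderiv_fun_neg
  exact this ▸ hf.2.2.neg

theorem sub {f g : E → F} (hf : BddC2 f) (hg : BddC2 g) : BddC2 fun x => f x - g x := by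
  simpa only [sub_eq_add_neg] using hf.add hg.neg

theorem sum {ι : Type*} (s : Finset ι) {f : ι → E → F} (hf : ∀ i ∈ s, BddC2 (f i)) :
    BddC2 fun x => ∑ i ∈ s, f i x := by
  classical
  induction s using Finset.induction_on with
  | empty => simpa using const (0 : F)
  | insert a s ha ih =>
    simp only [Finset.sum_insert ha]
    exact (hf a (mem_insert_self a s)).add (ih fun i hi => hf i (mem_insert_of_mem hi))

theorem mul {f g : E → ℝ} (hf : BddC2 f) (hg : BddC2 g) : BddC2 fun x => f x * g x := by
  refine ⟨hf.1.mul hg.1, hf.2.1.smul hg.2.1, ?_⟩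
  have : fderiv ℝ (fun x => f x * g x) = fun x => f x • fderiv ℝ g x + g x • fderiv ℝ f x :=
    funext fun x => fderiv_fun_mul (hf.2.1.1 x) (hg.2.1.1 x)
  exact this ▸ (hf.2.1.smul hg.2.2).add (hg.2.1.smul hf.2.2)

theorem comp {φ : ℝ → ℝ} {K : Set ℝ} (hK : IsCompact K) (hφ : ∀ t ∈ K, ContDiffAt ℝ 2 φ t)
    {f : E → ℝ} (hf : BddC2 f) (hfK : ∀ x, f x ∈ K) : BddC2 fun x => φ (f x) := by
  refine ⟨contDiff_iff_contDiffAt.2 fun x => (hφ _ (hfK x)).comp x hf.1.contDiffAt,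
    hf.2.1.comp hK (fun t ht => (hφ t ht).of_le one_le_two) hfK, ?_⟩
  have : fderiv ℝ (fun x => φ (f x)) = fun x => deriv φ (f x) • fderiv ℝ f x :=
    funext fun x => (((hφ _ (hfK x)).differentiableAt two_ne_zero).hasDerivAt.comp_hasFDerivAt x
      (hf.2.1.1 x).hasFDerivAt).fderiv
  exact this ▸ (hf.2.1.comp hK (fun t ht => (hφ t ht).derivWithin le_rfl) hfK).smul hf.2.2

theorem comp_of_le {φ : ℝ → ℝ} {c : ℝ} (hφ : ∀ t, c ≤ t → ContDiffAt ℝ 2 φ t)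
    {f : E → ℝ} (hf : BddC2 f) (hcf : ∀ x, c ≤ f x) : BddC2 fun x => φ (f x) := by
  obtain ⟨C, hC⟩ := (bddC2_iff.1 hf).2
  exact hf.comp isCompact_Icc (fun t ht => hφ t ht.1)
    fun x => ⟨hcf x, (le_abs_self _).trans (hC x).1⟩

theorem inv {f : E → ℝ} {c : ℝ} (hc : 0 < c) (hf : BddC2 f) (hcf : ∀ x, c ≤ f x) :
    BddC2 fun x => (f x)⁻¹ :=
  hf.comp_of_le (fun _ ht => contDiffAt_inv ℝ (hc.trans_le ht).ne') hcf

theorem sqrt {f : E → ℝ} {c : ℝ} (hc : 0 < c) (hf : BddC2 f) (hcf : ∀ x, c ≤ f x) :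
    BddC2 fun x => √(f x) :=
  hf.comp_of_le (fun _ ht => Real.contDiffAt_sqrt (hc.trans_le ht).ne') hcf

end BddC2

end BoundedDerivatives

namespace Matrix

variable {n : Type*} [Fintype n] [LinearOrder n]

theorem IsLowerTriangular.mul_transpose_apply [LocallyFiniteOrderBot n] {L : Matrix n n ℝ}
    (hL : L.IsLowerTriangular) (i j : n) :
    (L * Lᵀ) i j = ∑ k ∈ Iio j, L i k * L j k + L i j * L j j := by
  have hvanish : ∀ k ∈ univ, k ∉ Iic j → L i k * L j k = 0 := fun k _ hk => by
    have hjk : j < k := by simpa using hk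
    rw [hL hjk, mul_zero]
  simp only [mul_apply, transpose_apply]
  rw [← sum_subset (subset_univ _) hvanish, ← Iio_insert, sum_insert notMem_Iio_self,
    add_comm]

theorem IsLowerTriangular.inv_apply_self_mul_apply_self {L : Matrix n n ℝ}
    (hL : L.IsLowerTriangular) (hdet : IsUnit L.det) (j : n) : L⁻¹ j j * L j j = 1 := by
  have hinv : L⁻¹.IsLowerTriangular := by
    have := L.invertibleOfIsUnitDet hdet
    exact blockTriangular_inv_of_blockTriangular hL
  have h := congr_fun (congr_fun (nonsing_inv_mul L hdet) j) j
  rwa [mul_apply, sum_eq_single j, one_apply_eq] at h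
  · intro k _ hkj
    rcases hkj.lt_or_gt with hk | hk
    · rw [hL hk, mul_zero]
    · rw [hinv hk, zero_mul]
  · simp

theorem PosDef.exists_isLowerTriangular_mul_transpose_eq [WellFoundedLT n]
    [LocallyFiniteOrderBot n] {A : Matrix n n ℝ} (hA : A.PosDef) :
    ∃ L : Matrix n n ℝ, L.IsLowerTriangular ∧ L * Lᵀ = A := by
  set D := LDL.diagEntries hA
  have hD : diagonal D = LDL.lowerInv hA * A * (LDL.lowerInv hA)ᴴ := LDL.diag_eq_lowerInv_conj hA
  have hD_nonneg : ∀ i, 0 ≤ D i :=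
    posSemidef_diagonal_iff.1 (hD ▸ hA.posSemidef.mul_mul_conjTranspose_same _)
  have hLi : (LDL.lowerInv hA).IsLowerTriangular := fun _ _ => LDL.lowerInv_triangular hA
  refine ⟨LDL.lower hA * diagonal fun i => √(D i),
    (blockTriangular_inv_of_blockTriangular hLi).mul (blockTriangular_diagonal _), ?_⟩
  have hsq : (fun i => √(D i) * √(D i)) = D := funext fun i => Real.mul_self_sqrt (hD_nonneg i)
  calc _ = LDL.lower hA * (diagonal fun i => √(D i) * √(D i)) * (LDL.lower hA)ᴴ := by
        rw [transpose_mul, diagonal_transpose, ← diagonal_mul_diagonal,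
          conjTranspose_eq_transpose_of_trivial]
        noncomm_ring
    _ = A := by rw [hsq]; exact LDL.lower_conj_diag hA

theorem IsLowerTriangular.exists_pos_diag_mul_transpose_eq {L : Matrix n n ℝ}
    (hL : L.IsLowerTriangular) (hL0 : ∀ i, L i i ≠ 0) :
    ∃ L' : Matrix n n ℝ, L'.IsLowerTriangular ∧ (∀ i, 0 < L' i i) ∧ L' * L'ᵀ = L * Lᵀ := by
  set s : n → ℝ := fun i => SignType.sign (L i i)
  have hss : (fun i => s i * s i) = 1 := funext fun i => by
    rw [← SignType.coe_mul, ← sign_mul, sign_pos (mul_self_pos.2 (hL0 i))]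
    rfl
  refine ⟨L * diagonal s, hL.mul (blockTriangular_diagonal _), fun i => ?_, ?_⟩
  · rw [mul_diagonal, self_mul_sign]
    exact abs_pos.2 (hL0 i)
  · rw [transpose_mul, diagonal_transpose, Matrix.mul_assoc, ← Matrix.mul_assoc (diagonal s),
      diagonal_mul_diagonal, hss, Pi.one_def, diagonal_one, Matrix.one_mul]

theorem PosDef.exists_cholesky [WellFoundedLT n] [LocallyFiniteOrderBot n] {A : Matrix n n ℝ}
    (hA : A.PosDef) :
    ∃ L : Matrix n n ℝ, L.IsLowerTriangular ∧ (∀ i, 0 < L i i) ∧ L * Lᵀ = A := by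
  obtain ⟨L, hL, rfl⟩ := hA.exists_isLowerTriangular_mul_transpose_eq
  have hdet : ∏ i, L i i ≠ 0 := by
    simpa [det_mul, det_of_isLowerTriangular L hL, mul_self_eq_zero] using hA.det_pos.ne'
  exact hL.exists_pos_diag_mul_transpose_eq (prod_ne_zero_iff.1 hdet · (mem_univ _))

theorem IsLowerTriangular.le_sq_apply_self {L : Matrix n n ℝ} (hL : L.IsLowerTriangular)
    (hpos : ∀ i, 0 < L i i) {lam : ℝ} (hlam : (L * Lᵀ - lam • 1).PosSemidef) (j : n) :
    lam ≤ L j j ^ 2 := by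
  have hdet : IsUnit L.det := by
    rw [det_of_isLowerTriangular L hL]
    exact (prod_pos fun i _ => hpos i).ne'.isUnit
  set v : n → ℝ := L⁻¹ j
  have hvL : v ᵥ* L = Pi.single j 1 := by
    ext k
    simpa [vecMul, dotProduct, mul_apply, one_apply, Pi.single_apply, eq_comm] using
      congr_fun (congr_fun (nonsing_inv_mul L hdet) j) k
  have hquad : v ⬝ᵥ ((L * Lᵀ) *ᵥ v) = 1 := by
    rw [← mulVec_mulVec, dotProduct_mulVec, ← vecMul_transpose, transpose_transpose, hvL]
    simp
  have hnorm : lam * (v ⬝ᵥ v) ≤ 1 := by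
    have := hlam.dotProduct_mulVec_nonneg v
    simp only [sub_mulVec, dotProduct_sub, smul_mulVec, one_mulVec, dotProduct_smul,
      star_trivial, hquad, smul_eq_mul] at this
    linarith
  have hvj : v j ^ 2 ≤ v ⬝ᵥ v := by
    simpa [dotProduct, sq] using single_le_sum (fun i _ => mul_self_nonneg (v i)) (mem_univ j)
  have hvLj : v j * L j j = 1 := hL.inv_apply_self_mul_apply_self hdet j
  rcases le_or_gt lam 0 with hlam0 | hlam0
  · exact hlam0.trans (sq_nonneg _)
  have hlam_vj : lam * v j ^ 2 ≤ 1 := (mul_le_mul_of_nonneg_left hvj hlam0.le).trans hnorm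
  calc lam = lam * v j ^ 2 * L j j ^ 2 := by rw [mul_assoc, ← mul_pow, hvLj]; ring
    _ ≤ L j j ^ 2 := by nlinarith [sq_nonneg (L j j)]

end Matrix

theorem bddC2_apply_of_isLowerTriangular {E n : Type*} [NormedAddCommGroup E] [NormedSpace ℝ E]
    [Fintype n] [LinearOrder n] [LocallyFiniteOrderBot n] [WellFoundedLT n]
    {G : E → Matrix n n ℝ} (hG : ∀ x, (G x).IsLowerTriangular) {c : ℝ} (hc : 0 < c)
    (hdiag : ∀ x j, c ≤ G x j j) (hH : ∀ i j, BddC2 fun x => (G x * (G x)ᵀ) i j) (i j : n) :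
    BddC2 fun x => G x i j := by
  induction j using WellFoundedLT.induction generalizing i with
  | ind j ih =>
  have hsum : ∀ i, BddC2 fun x => ∑ k ∈ Iio j, G x i k * G x j k := fun i =>
    BddC2.sum _ fun k hk => (ih k (mem_Iio.1 hk) i).mul (ih k (mem_Iio.1 hk) j)
  have hjj : BddC2 fun x => G x j j := by
    have hsq : ∀ x, G x j j * G x j j = (G x * (G x)ᵀ) j j - ∑ k ∈ Iio j, G x j k * G x j k :=
      fun x => by rw [(hG x).mul_transpose_apply]; ring
    have hsqrt : (fun x => G x j j) = fun x => √(G x j j * G x j j) :=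
      funext fun x => (Real.sqrt_mul_self (hc.trans_le (hdiag x j)).le).symm
    simp only [hsqrt, hsq]
    refine ((hH j j).sub (hsum j)).sqrt (mul_pos hc hc) fun x => ?_
    rw [← hsq]
    exact mul_le_mul (hdiag x j) (hdiag x j) hc.le (hc.le.trans (hdiag x j))
  rcases lt_trichotomy i j with hij | rfl | hji
  · simpa only [fun x => hG x hij] using BddC2.const (0 : ℝ)
  · exact hjj
  · have hij : ∀ x, G x i j = ((G x * (G x)ᵀ) i j - ∑ k ∈ Iio j, G x i k * G x j k) * (G x j j)⁻¹ :=
      fun x => by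
        rw [(hG x).mul_transpose_apply, add_sub_cancel_left,
          mul_inv_cancel_right₀ (hc.trans_le (hdiag x j)).ne']
    simp only [hij]
    exact ((hH i j).sub (hsum i)).mul (hjj.inv hc (hdiag · j))

theorem cholesky_factor_regularity_general {p d : ℕ}
    (H : EuclideanSpace ℝ (Fin p) → Matrix (Fin d) (Fin d) ℝ)
    (hC2 : ∀ i j : Fin d, ContDiff ℝ 2 (fun x => H x i j))
    (hbdd : ∃ C : ℝ, ∀ x, ∀ i j : Fin d,
      |H x i j| ≤ C ∧ ‖fderiv ℝ (fun x => H x i j) x‖ ≤ C ∧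
        ‖fderiv ℝ (fderiv ℝ (fun x => H x i j)) x‖ ≤ C)
    (lam : ℝ) (hlam : 0 < lam)
    (hnd : ∀ x, (H x - lam • (1 : Matrix (Fin d) (Fin d) ℝ)).PosSemidef) :
    ∃ G : EuclideanSpace ℝ (Fin p) → Matrix (Fin d) (Fin d) ℝ,
      (∀ x, ∀ i j : Fin d, i < j → G x i j = 0) ∧
      (∀ x, ∀ i : Fin d, 0 < G x i i) ∧
      (∀ x, G x * (G x)ᵀ = H x) ∧
      (∀ i j : Fin d, ContDiff ℝ 2 (fun x => G x i j)) ∧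
      (∃ C : ℝ, ∀ x, ∀ i j : Fin d,
        |G x i j| ≤ C ∧ ‖fderiv ℝ (fun x => G x i j) x‖ ≤ C ∧
          ‖fderiv ℝ (fderiv ℝ (fun x => G x i j)) x‖ ≤ C) := by
  have hpd : ∀ x, (H x).PosDef := fun x => by
    simpa using PosDef.posSemidef_add (hnd x) (PosDef.one.smul hlam)
  choose G hG hGpos hGH using fun x => (hpd x).exists_cholesky
  have hdiag : ∀ x j, √lam ≤ G x j j := fun x j =>
    Real.sqrt_le_iff.2 ⟨(hGpos x j).le, (hG x).le_sq_apply_self (hGpos x) ((hGH x).symm ▸ hnd x) j⟩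
  obtain ⟨CH, hCH⟩ := hbdd
  have hH : ∀ i j, BddC2 fun x => H x i j := fun i j =>
    bddC2_iff.2 ⟨hC2 i j, CH, fun x => by simpa only [Real.norm_eq_abs] using hCH x i j⟩
  have hGbdd : ∀ i j, BddC2 fun x => G x i j :=
    bddC2_apply_of_isLowerTriangular hG (Real.sqrt_pos.2 hlam) hdiag (by simpa only [hGH] using hH)
  choose C hC using fun i j => (bddC2_iff.1 (hGbdd i j)).2
  obtain ⟨M, hM⟩ := Finite.exists_le fun ij : Fin d × Fin d => C ij.1 ij.2
  refine ⟨G, fun x _ _ hij => hG x hij, hGpos, hGH, fun i j => (hGbdd i j).1, M, fun x i j => ?_⟩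
  obtain ⟨h₀, h₁, h₂⟩ := hC i j x
  exact ⟨(Real.norm_eq_abs _ ▸ h₀).trans (hM (i, j)), h₁.trans (hM (i, j)), h₂.trans (hM (i, j))⟩

/-- C² regularity with bounded derivatives of the Cholesky factor of a C²-bounded,
uniformly nondegenerate symmetric-matrix-valued map. -/
theorem cholesky_factor_regularity {p d : ℕ} (hp : 1 ≤ p) (hd : 1 ≤ d)
    (H : EuclideanSpace ℝ (Fin p) → Matrix (Fin d) (Fin d) ℝ)
    (hsymm : ∀ x, (H x).IsSymm)
    (hC2 : ∀ i j : Fin d, ContDiff ℝ 2 (fun x => H x i j))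
    (hbdd : ∃ C : ℝ, ∀ x, ∀ i j : Fin d,
      |H x i j| ≤ C ∧ ‖fderiv ℝ (fun x => H x i j) x‖ ≤ C ∧
        ‖fderiv ℝ (fderiv ℝ (fun x => H x i j)) x‖ ≤ C)
    (lam : ℝ) (hlam : 0 < lam)
    (hnd : ∀ x, (H x - lam • (1 : Matrix (Fin d) (Fin d) ℝ)).PosSemidef) :
    ∃ G : EuclideanSpace ℝ (Fin p) → Matrix (Fin d) (Fin d) ℝ,
      (∀ x, ∀ i j : Fin d, i < j → G x i j = 0) ∧
      (∀ x, ∀ i : Fin d, 0 < G x i i) ∧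
      (∀ x, G x * (G x)ᵀ = H x) ∧
      (∀ i j : Fin d, ContDiff ℝ 2 (fun x => G x i j)) ∧
      (∃ C : ℝ, ∀ x, ∀ i j : Fin d,
        |G x i j| ≤ C ∧ ‖fderiv ℝ (fun x => G x i j) x‖ ≤ C ∧
          ‖fderiv ℝ (fderiv ℝ (fun x => G x i j)) x‖ ≤ C) :=
  cholesky_factor_regularity_general H hC2 hbdd lam hlam hnd
end
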